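/- arXiv:2209.05713 — 2 statements merged into one kernel-verified Lean document; each statement's English description precedes it below -/
import Mathlib

section
/- If (p_n) is a sequence in (0,1) with n·p_n^{k+1} → 0 and n·p_n^{k} → ∞, then C(n, 2k+2) · p_n^{2k(k+1)} (1−p_n)^{k+1} (1−p_n^{k+1})^{n−2k−2} → ∞ as n → ∞. -/
/-!
Since `C(n, 2k+2) ~ n^(2k+2) / (2k+2)!` and `p^(2k(k+1)) = (p^k)^(2k+2)`, the leading factor
`C(n, 2k+2) p^(2k(k+1))` is asymptotic to `(n p^k)^(2k+2) / (2k+2)!`, which tends to infinity.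
The two remaining factors tend to `1` by Bernoulli's inequality `1 - N x ≤ (1 - x)^N ≤ 1`:
`p → 0` because `p = (n p^(k+1)) / (n p^k)`, and `(n - 2k - 2) p^(k+1) ≤ n p^(k+1) → 0`.
-/

open Filter Topology Asymptotics

lemma tendsto_choose_mul_pow_atTop_of_tendsto_mul_atTop {q : ℕ → ℝ} {m : ℕ} (hm : m ≠ 0)
    (hq : Tendsto (fun n : ℕ => (n : ℝ) * q n) atTop atTop) :
    Tendsto (fun n => (n.choose m : ℝ) * q n ^ m) atTop atTop := by
  have hequiv : (fun n => (n.choose m : ℝ) * q n ^ m) ~[atTop]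
      (fun n => ((n : ℝ) * q n) ^ m / m.factorial) :=
    ((isEquivalent_choose m).mul IsEquivalent.refl).congr_right
      (.of_eq (by ext; simp only [Pi.mul_apply, mul_pow]; ring))
  refine hequiv.symm.tendsto_atTop (Tendsto.atTop_div_const (by positivity) ?_)
  exact (tendsto_pow_atTop hm).comp hq

lemma tendsto_one_sub_pow_of_tendsto_mul_zero {α : Type*} {l : Filter α} {x : α → ℝ}
    {N : α → ℕ} (hx : ∀ a, x a ∈ Set.Icc 0 1)
    (hNx : Tendsto (fun a => (N a : ℝ) * x a) l (𝓝 0)) :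
    Tendsto (fun a => (1 - x a) ^ N a) l (𝓝 1) := by
  have hlower : Tendsto (fun a => 1 - (N a : ℝ) * x a) l (𝓝 1) := by
    simpa using tendsto_const_nhds.sub hNx
  refine tendsto_of_tendsto_of_tendsto_of_le_of_le hlower tendsto_const_nhds (fun a => ?_)
    (fun a => pow_le_one₀ (by linarith [(hx a).2]) (by linarith [(hx a).1]))
  simpa [sub_eq_add_neg] using one_add_mul_le_pow (a := -x a) (by linarith [(hx a).2]) (N a)

lemma tendsto_zero_of_tendsto_mul_pow_succ {p : ℕ → ℝ} {k : ℕ} (hp : ∀ n, p n ≠ 0)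
    (h1 : Tendsto (fun n : ℕ => (n : ℝ) * p n ^ (k + 1)) atTop (𝓝 0))
    (h2 : Tendsto (fun n : ℕ => (n : ℝ) * p n ^ k) atTop atTop) :
    Tendsto p atTop (𝓝 0) := by
  refine (h1.div_atTop h2).congr' ?_
  filter_upwards [eventually_ge_atTop 1] with n hn
  have : (n : ℝ) ≠ 0 := by positivity
  field_simp [hp n]
  ring

open Filter in
theorem expected_special_cycles_tendsto_atTop_general
    (k : ℕ) (p : ℕ → ℝ) (hp : ∀ n, p n ∈ Set.Ioo (0 : ℝ) 1)
    (h1 : Tendsto (fun n : ℕ => (n : ℝ) * p n ^ (k + 1)) atTop (nhds 0))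
    (h2 : Tendsto (fun n : ℕ => (n : ℝ) * p n ^ k) atTop atTop) :
    Tendsto (fun n => (n.choose (2 * k + 2) : ℝ) * p n ^ (2 * k * (k + 1)) *
        (1 - p n) ^ (k + 1) * (1 - p n ^ (k + 1)) ^ (n - 2 * k - 2))
      atTop atTop := by
  have hp_Icc : ∀ n, p n ∈ Set.Icc 0 1 := fun n => Set.Ioo_subset_Icc_self (hp n)
  have hp_zero : Tendsto p atTop (𝓝 0) :=
    tendsto_zero_of_tendsto_mul_pow_succ (fun n => (hp n).1.ne') h1 h2
  have hleading : Tendsto (fun n => (n.choose (2 * k + 2) : ℝ) * p n ^ (2 * k * (k + 1)))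
      atTop atTop := by
    simpa only [← pow_mul, show k * (2 * k + 2) = 2 * k * (k + 1) by ring] using
      tendsto_choose_mul_pow_atTop_of_tendsto_mul_atTop (q := fun n => p n ^ k)
        (m := 2 * k + 2) (by omega) h2
  have hmiddle : Tendsto (fun n => (1 - p n) ^ (k + 1)) atTop (𝓝 1) :=
    tendsto_one_sub_pow_of_tendsto_mul_zero hp_Icc (by simpa using hp_zero.const_mul _)
  have hlast : Tendsto (fun n => (1 - p n ^ (k + 1)) ^ (n - 2 * k - 2)) atTop (𝓝 1) := by
    refine tendsto_one_sub_pow_of_tendsto_mul_zero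
      (fun n => ⟨pow_nonneg (hp_Icc n).1 _, pow_le_one₀ (hp_Icc n).1 (hp_Icc n).2⟩) ?_
    refine squeeze_zero (fun n => by have := (hp_Icc n).1; positivity) (fun n => ?_) h1
    gcongr
    · exact pow_nonneg (hp_Icc n).1 _
    · exact_mod_cast (n - 2 * k).sub_le 2 |>.trans (n.sub_le _)
  exact (hleading.atTop_mul_pos one_pos hmiddle).atTop_mul_pos one_pos hlast

open Filter in
/-- If `p n ∈ (0,1)` with `n·p_n^{k+1} → 0` and `n·p_n^k → ∞`, then the expected number
of special persistent cycles,
`C(n, 2k+2) · p_n^{2k(k+1)} (1−p_n)^{k+1} (1−p_n^{k+1})^{n−2k−2}`, tends to infinity. -/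
theorem expected_special_cycles_tendsto_atTop
    (k : ℕ) (hk : 1 ≤ k) (p : ℕ → ℝ) (hp : ∀ n, p n ∈ Set.Ioo (0 : ℝ) 1)
    (h1 : Tendsto (fun n : ℕ => (n : ℝ) * p n ^ (k + 1)) atTop (nhds 0))
    (h2 : Tendsto (fun n : ℕ => (n : ℝ) * p n ^ k) atTop atTop) :
    Tendsto (fun n => (n.choose (2 * k + 2) : ℝ) * p n ^ (2 * k * (k + 1)) *
        (1 - p n) ^ (k + 1) * (1 - p n ^ (k + 1)) ^ (n - 2 * k - 2))
      atTop atTop :=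
  expected_special_cycles_tendsto_atTop_general k p hp h1 h2
end

section
/- Fix k ≥ 1. If p_n ≤ n^{−α} for some α > 1/k, then with high probability the clique complex of G(n, p_n) has vanishing k-th homology. -/
open MeasureTheory Filter

noncomputable def erdosRenyi (n : ℕ) (p : ENNReal) (hp : p ≤ 1) :
    Measure (Sym2 (Fin n) → Bool) :=
  Measure.pi fun _ => (PMF.bernoulli p.toNNReal (by simpa using ENNReal.toNNReal_mono ENNReal.one_ne_top hp)).toMeasure

def hasEdge {n : ℕ} (ω : Sym2 (Fin n) → Bool) (a b : Fin n) : Prop :=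
  a ≠ b ∧ ω s(a, b) = true

/-- The clique complex of the graph encoded by `ω`. -/
def cliqueComplexOf {n : ℕ} (ω : Sym2 (Fin n) → Bool) : Set (Finset (Fin n)) :=
  {s | ∀ a ∈ s, ∀ b ∈ s, a ≠ b → hasEdge ω a b}

def chainSign {α : Type*} [LinearOrder α] (x : α) (t : Finset α) : ℤ :=
  (-1) ^ (t.filter (fun y => y < x)).card

def IsSimplicialChain {α : Type*} (K : Set (Finset α)) (k : ℕ) {F : Type*} [Field F]
    (c : Finset α → F) : Prop :=
  ∀ s, c s ≠ 0 → s ∈ K ∧ s.card = k + 1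

def simplicialBoundary {α : Type*} [Fintype α] [LinearOrder α] {F : Type*} [Field F]
    (c : Finset α → F) : Finset α → F :=
  fun t => ∑ x ∈ tᶜ, (chainSign x t : F) * c (insert x t)

/-- The `k`-th simplicial homology of `K` vanishes over `F`: every `k`-cycle is a
boundary. -/
def HomologyVanishes {α : Type*} [Fintype α] [LinearOrder α]
    (K : Set (Finset α)) (k : ℕ) (F : Type*) [Field F] : Prop :=
  ∀ c : Finset α → F, IsSimplicialChain K k c → simplicialBoundary c = 0 →
    ∃ d : Finset α → F, IsSimplicialChain K (k + 1) d ∧ simplicialBoundary d = c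

/-!
A `k`-cycle is a sum of face-connected cycles: restricting a cycle to a class of its support
under "sharing a facet" gives a cycle. Growing a vertex set along a face-connected family of
`(k + 1)`-cliques, every new vertex brings at least `k` edges, so if no `V` vertices span
`k V - (k + 1).choose 2` edges, each face-connected cycle lives on fewer than `V` vertices. If in
addition no `w ≤ V` vertices span `k w` edges, every vertex set there has a vertex of degree
`< 2 k` or a cone vertex. A cone vertex fills a cycle outright; at a vertex `x` of low degree the
link of the cycle is a `(k - 1)`-cycle on at most `2 k - 1` vertices, which is a boundary for the
same reason, and subtracting a cone over its filling leaves a cycle on fewer vertices.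

For `p ≤ n ^ (-α)` the expected number of `w`-sets spanning `m` edges is `O(n ^ (w - α m))`, so
w.h.p. there are none when `w < α m`; as `α k > 1` this holds for both families of constraints
once `V` is large.
-/

open Finset

section Sign

variable {α : Type*} [LinearOrder α] {F : Type*} [Field F]

lemma chainSign_mul_self (x : α) (t : Finset α) : (chainSign x t : F) * chainSign x t = 1 := by
  rw [← Int.cast_mul, chainSign, ← pow_add, Even.neg_one_pow ⟨_, rfl⟩, Int.cast_one]

lemma chainSign_insert {x : α} {t : Finset α} (hx : x ∉ t) (y : α) :
    chainSign y (insert x t) = (if x < y then -1 else 1) * chainSign y t := by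
  unfold chainSign
  rw [filter_insert]
  split_ifs
  · rw [card_insert_of_notMem fun h => hx (mem_of_mem_filter x h), pow_succ, mul_comm]
  · rw [one_mul]

lemma chainSign_insert_mul_chainSign_insert {x y : α} {t : Finset α} (hxy : x ≠ y)
    (hx : x ∉ t) (hy : y ∉ t) :
    (chainSign y (insert x t) : F) * chainSign x (insert y t) =
      -(chainSign x t * chainSign y t) := by
  rw [chainSign_insert hx, chainSign_insert hy]
  rcases hxy.lt_or_gt with h | h <;> simp [h, h.not_gt] <;> ring

lemma chainSign_mul_chainSign_insert_swap {x y : α} {t : Finset α} (hxy : x ≠ y)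
    (hx : x ∉ t) (hy : y ∉ t) :
    (chainSign y t : F) * chainSign x (insert y t) =
      -(chainSign x t * chainSign y (insert x t)) := by
  rw [chainSign_insert hx, chainSign_insert hy]
  rcases hxy.lt_or_gt with h | h <;> simp [h, h.not_gt] <;> ring

end Sign

section ConeAndLink

variable {α : Type*} [LinearOrder α] {F : Type*} [Field F]

def simplicialCone (x : α) (c : Finset α → F) : Finset α → F :=
  fun s => if x ∈ s then chainSign x (s.erase x) * c (s.erase x) else 0

def simplicialLink (x : α) (c : Finset α → F) : Finset α → F :=
  fun t => if x ∈ t then 0 else chainSign x t * c (insert x t)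

@[simp]
lemma simplicialCone_zero (x : α) : simplicialCone x (0 : Finset α → F) = 0 := by
  funext s
  simp [simplicialCone]

@[simp]
lemma simplicialLink_zero (x : α) : simplicialLink x (0 : Finset α → F) = 0 := by
  funext s
  simp [simplicialLink]

lemma simplicialCone_insert {x : α} {t : Finset α} (hx : x ∉ t) (c : Finset α → F) :
    simplicialCone x c (insert x t) = chainSign x t * c t := by
  rw [simplicialCone, if_pos (mem_insert_self x t), erase_insert hx]

lemma ne_zero_of_simplicialCone_ne_zero {x : α} {c : Finset α → F} {s : Finset α}
    (hs : simplicialCone x c s ≠ 0) : x ∈ s ∧ c (s.erase x) ≠ 0 := by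
  unfold simplicialCone at hs
  split_ifs at hs with hx
  · exact ⟨hx, right_ne_zero_of_mul hs⟩
  · exact absurd rfl hs

lemma ne_zero_of_simplicialLink_ne_zero {x : α} {c : Finset α → F} {t : Finset α}
    (ht : simplicialLink x c t ≠ 0) : x ∉ t ∧ c (insert x t) ≠ 0 := by
  unfold simplicialLink at ht
  split_ifs at ht with hx
  · exact absurd rfl ht
  · exact ⟨hx, right_ne_zero_of_mul ht⟩

lemma simplicialCone_simplicialLink (x : α) (c : Finset α → F) (s : Finset α) :
    simplicialCone x (simplicialLink x c) s = if x ∈ s then c s else 0 := by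
  by_cases hx : x ∈ s
  · rw [simplicialCone, if_pos hx, if_pos hx, simplicialLink, if_neg (notMem_erase x s),
      insert_erase hx, ← mul_assoc, chainSign_mul_self, one_mul]
  · rw [simplicialCone, if_neg hx, if_neg hx]

end ConeAndLink

section Boundary

variable {α : Type*} [Fintype α] [LinearOrder α] {F : Type*} [Field F]

lemma simplicialBoundary_add (c d : Finset α → F) :
    simplicialBoundary (c + d) = simplicialBoundary c + simplicialBoundary d := by
  funext t
  simp only [simplicialBoundary, Pi.add_apply, mul_add, sum_add_distrib]

lemma simplicialBoundary_sub (c d : Finset α → F) :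
    simplicialBoundary (c - d) = simplicialBoundary c - simplicialBoundary d := by
  funext t
  simp only [simplicialBoundary, Pi.sub_apply, mul_sub, sum_sub_distrib]

lemma simplicialBoundary_simplicialCone (x : α) (c : Finset α → F) :
    simplicialBoundary (simplicialCone x c) = c - simplicialCone x (simplicialBoundary c) := by
  funext t
  rw [Pi.sub_apply, eq_sub_iff_add_eq]
  by_cases hx : x ∈ t
  · obtain ⟨u, hxu, rfl⟩ : ∃ u, x ∉ u ∧ insert x u = t :=
      ⟨t.erase x, notMem_erase x t, insert_erase hx⟩
    have hxc : x ∈ uᶜ := mem_compl.2 hxu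
    rw [simplicialCone_insert hxu, simplicialBoundary, simplicialBoundary, ← add_sum_erase _ _ hxc,
      ← compl_insert, mul_add, ← mul_assoc, chainSign_mul_self, one_mul, mul_sum, add_left_comm,
      ← sum_add_distrib, add_eq_left]
    refine sum_eq_zero fun y hy => ?_
    have hyx : y ≠ x := fun h => by simp [h] at hy
    have hyu : y ∉ u := fun h => by simp [h] at hy
    rw [insert_comm, simplicialCone_insert (by simp [hxu, hyx.symm]), ← mul_assoc, ← mul_assoc,
      ← add_mul, chainSign_insert_mul_chainSign_insert hyx.symm hxu hyu, neg_add_cancel, zero_mul]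
  · rw [simplicialCone, if_neg hx, add_zero, simplicialBoundary,
      sum_eq_single_of_mem x (mem_compl.2 hx), simplicialCone_insert hx, ← mul_assoc,
      chainSign_mul_self, one_mul]
    intro y _ hyx
    rw [simplicialCone, if_neg (by simp [hx, hyx.symm]), mul_zero]

lemma simplicialBoundary_simplicialLink (x : α) (c : Finset α → F) :
    simplicialBoundary (simplicialLink x c) = -simplicialLink x (simplicialBoundary c) := by
  funext t
  by_cases hx : x ∈ t
  · rw [Pi.neg_apply, simplicialLink, if_pos hx, neg_zero, simplicialBoundary]
    exact sum_eq_zero fun y _ => by rw [simplicialLink, if_pos (mem_insert_of_mem hx), mul_zero]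
  · rw [Pi.neg_apply, simplicialLink, if_neg hx, simplicialBoundary, simplicialBoundary,
      ← add_sum_erase _ _ (mem_compl.2 hx), simplicialLink, if_pos (mem_insert_self x t),
      mul_zero, zero_add, ← compl_insert, mul_sum, ← sum_neg_distrib]
    refine sum_congr rfl fun y hy => ?_
    have hyx : y ≠ x := fun h => by simp [h] at hy
    have hyt : y ∉ t := fun h => by simp [h] at hy
    rw [simplicialLink, if_neg (by simp [hx, hyx.symm]), insert_comm, ← mul_assoc, ← mul_assoc,
      chainSign_mul_chainSign_insert_swap hyx.symm hx hyt, neg_mul]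

end Boundary

section Chains

variable {α : Type*} {F : Type*} [Field F] {K K' : Set (Finset α)} {k : ℕ} {c d : Finset α → F}

lemma IsSimplicialChain.mono (hc : IsSimplicialChain K k c) (hK : K ⊆ K') :
    IsSimplicialChain K' k c :=
  fun s hs => ⟨hK (hc s hs).1, (hc s hs).2⟩

lemma IsSimplicialChain.add (hc : IsSimplicialChain K k c) (hd : IsSimplicialChain K k d) :
    IsSimplicialChain K k (c + d) := fun s hs => by
  by_cases hcs : c s = 0
  · exact hd s fun h => hs (by simp [hcs, h])
  · exact hc s hcs

lemma IsSimplicialChain.sub (hc : IsSimplicialChain K k c) (hd : IsSimplicialChain K k d) :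
    IsSimplicialChain K k (c - d) := fun s hs => by
  by_cases hcs : c s = 0
  · exact hd s fun h => hs (by simp [hcs, h])
  · exact hc s hcs

lemma IsSimplicialChain.indicator (hc : IsSimplicialChain K k c) (C : Set (Finset α)) :
    IsSimplicialChain K k (C.indicator c) :=
  fun s hs => hc s (Set.indicator_apply_ne_zero.1 hs).2

end Chains

def cliqueComplexOn {α : Type*} (G : SimpleGraph α) (U : Finset α) : Set (Finset α) :=
  {s | G.IsClique (s : Set α) ∧ s ⊆ U}

lemma cliqueComplexOn_mono {α : Type*} {G : SimpleGraph α} {U U' : Finset α} (h : U ⊆ U') :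
    cliqueComplexOn G U ⊆ cliqueComplexOn G U' :=
  fun _ hs => ⟨hs.1, hs.2.trans h⟩

section CliqueComplex

variable {α : Type*} [LinearOrder α] {F : Type*} [Field F] {G : SimpleGraph α}
  {x : α} {j : ℕ} {c : Finset α → F}

lemma IsSimplicialChain.simplicialCone {N U : Finset α}
    (hc : IsSimplicialChain (cliqueComplexOn G N) j c) (hxN : ∀ y ∈ N, y ≠ x → G.Adj x y)
    (hNU : insert x N ⊆ U) :
    IsSimplicialChain (cliqueComplexOn G U) (j + 1) (simplicialCone x c) := fun s hs => by
  obtain ⟨hxs, hcs⟩ := ne_zero_of_simplicialCone_ne_zero hs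
  obtain ⟨⟨hclique, hsub⟩, hcard⟩ := hc _ hcs
  rw [← insert_erase hxs]
  refine ⟨⟨?_, (insert_subset_insert x hsub).trans hNU⟩, ?_⟩
  · rw [coe_insert, SimpleGraph.isClique_insert]
    exact ⟨hclique, fun y hy hxy => hxN y (hsub hy) hxy.symm⟩
  · rw [card_insert_of_notMem (notMem_erase x s), hcard]

lemma IsSimplicialChain.simplicialLink [DecidableRel G.Adj] {U : Finset α}
    (hc : IsSimplicialChain (cliqueComplexOn G U) (j + 1) c) :
    IsSimplicialChain (cliqueComplexOn G {y ∈ U | G.Adj x y}) j (simplicialLink x c) :=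
  fun t ht => by
  obtain ⟨hxt, hct⟩ := ne_zero_of_simplicialLink_ne_zero ht
  obtain ⟨⟨hclique, hsub⟩, hcard⟩ := hc _ hct
  rw [coe_insert, SimpleGraph.isClique_insert] at hclique
  rw [card_insert_of_notMem hxt, add_left_inj] at hcard
  refine ⟨⟨hclique.1, fun y hy => mem_filter.2 ⟨hsub (mem_insert_of_mem hy), ?_⟩⟩, hcard⟩
  exact hclique.2 y hy fun h => hxt (h ▸ hy)

variable [Fintype α]

lemma homologyVanishes_cliqueComplexOn_empty : HomologyVanishes (cliqueComplexOn G ∅) j F :=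
  fun c hc _ => by
  obtain rfl : c = 0 := funext fun s => by_contra fun hs => by
    obtain ⟨⟨-, hs⟩, hcard⟩ := hc s hs
    simp [subset_empty.1 hs] at hcard
  exact ⟨0, fun s hs => absurd rfl hs, funext fun t => by simp [simplicialBoundary]⟩

lemma homologyVanishes_cliqueComplexOn_of_cone {U : Finset α} (hx : x ∈ U)
    (hcone : ∀ y ∈ U, y ≠ x → G.Adj x y) : HomologyVanishes (cliqueComplexOn G U) j F :=
  fun c hc hcyc => ⟨simplicialCone x c, hc.simplicialCone hcone (insert_subset hx subset_rfl),
    by rw [simplicialBoundary_simplicialCone, hcyc, simplicialCone_zero, sub_zero]⟩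

/-- The link of `x` is a cycle on the neighbourhood of `x`; filling it there and subtracting the
cone over the filling turns `c` into a cycle that avoids `x`. -/
lemma homologyVanishes_cliqueComplexOn_of_link [DecidableRel G.Adj] {U : Finset α} (hx : x ∈ U)
    (hlink : HomologyVanishes (cliqueComplexOn G {y ∈ U | G.Adj x y}) j F)
    (herase : HomologyVanishes (cliqueComplexOn G (U.erase x)) (j + 1) F) :
    HomologyVanishes (cliqueComplexOn G U) (j + 1) F := by
  intro c hc hcyc
  set N := {y ∈ U | G.Adj x y}
  have hNx : N ⊆ U.erase x := fun y hy =>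
    mem_erase.2 ⟨((mem_filter.1 hy).2.ne).symm, (mem_filter.1 hy).1⟩
  have hzcyc : simplicialBoundary (simplicialLink x c) = 0 := by
    rw [simplicialBoundary_simplicialLink, hcyc, simplicialLink_zero, neg_zero]
  obtain ⟨w, hw, hwz⟩ := hlink _ hc.simplicialLink hzcyc
  have hcx : IsSimplicialChain (cliqueComplexOn G (U.erase x)) (j + 1)
      (c - simplicialCone x (simplicialLink x c)) := fun s hs => by
    rw [Pi.sub_apply, simplicialCone_simplicialLink] at hs
    by_cases hxs : x ∈ s
    · simp [hxs] at hs
    · rw [if_neg hxs, sub_zero] at hs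
      obtain ⟨⟨hcl, hsU⟩, hcard⟩ := hc s hs
      exact ⟨⟨hcl, subset_erase.2 ⟨hsU, hxs⟩⟩, hcard⟩
  obtain ⟨d, hd, hdc⟩ := herase (c - simplicialCone x (simplicialLink x c) + w)
    (hcx.add (hw.mono (cliqueComplexOn_mono hNx))) (by
      rw [simplicialBoundary_add, simplicialBoundary_sub, simplicialBoundary_simplicialCone, hzcyc,
        hcyc, hwz, simplicialCone_zero]
      abel)
  refine ⟨d - simplicialCone x w, (hd.mono (cliqueComplexOn_mono (erase_subset x U))).sub
    (hw.simplicialCone (fun y hy _ => (mem_filter.1 hy).2) (insert_subset hx (filter_subset _ _))),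
    ?_⟩
  rw [simplicialBoundary_sub, hdc, simplicialBoundary_simplicialCone, hwz]
  abel

end CliqueComplex

lemma Relation.ReflTransGen.exists_step_of_not {α : Type*} {r : α → α → Prop} {P : α → Prop}
    {a b : α} (hab : Relation.ReflTransGen r a b) (ha : P a) (hb : ¬P b) :
    ∃ x y, r x y ∧ P x ∧ ¬P y := by
  induction hab with
  | refl => exact absurd ha hb
  | @tail x y _ hxy ih =>
    by_cases hx : P x
    exacts [⟨x, y, hxy, hx, hb⟩, ih hx]

namespace SimpleGraph

variable {α : Type*}

def restrict (G : SimpleGraph α) (W : Finset α) : SimpleGraph α where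
  Adj a b := a ∈ W ∧ b ∈ W ∧ G.Adj a b
  symm := ⟨fun _ _ h => ⟨h.2.1, h.1, h.2.2.symm⟩⟩

@[simp]
lemma restrict_adj {G : SimpleGraph α} {W : Finset α} {a b : α} :
    (G.restrict W).Adj a b ↔ a ∈ W ∧ b ∈ W ∧ G.Adj a b :=
  Iff.rfl

lemma restrict_le (G : SimpleGraph α) (W : Finset α) : G.restrict W ≤ G :=
  fun _ _ h => h.2.2

/-- A variant of `(2 j - 1)`-degeneracy in which vertices adjacent to everything that is left
may also be peeled off. -/
def IsConeDegenerate (G : SimpleGraph α) [DecidableRel G.Adj] (j : ℕ) (U : Finset α) : Prop :=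
  ∀ W ⊆ U, W.Nonempty → ∃ x ∈ W, (∀ y ∈ W, y ≠ x → G.Adj x y) ∨ #{y ∈ W | G.Adj x y} < 2 * j

section Degenerate

variable {G : SimpleGraph α} [DecidableRel G.Adj] {j : ℕ} {U : Finset α}

lemma IsConeDegenerate.mono {U' : Finset α} (h : G.IsConeDegenerate j U) (hU : U' ⊆ U) :
    G.IsConeDegenerate j U' :=
  fun W hW => h W (hW.trans hU)

/-- On at most `2 j + 1` vertices, a vertex that is not a cone misses one of the others. -/
lemma isConeDegenerate_of_card_le [DecidableEq α] (hU : #U ≤ 2 * j + 1) :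
    G.IsConeDegenerate j U := by
  intro W hWU ⟨x, hx⟩
  refine ⟨x, hx, or_iff_not_imp_left.2 fun hcone => ?_⟩
  obtain ⟨y, hy, hyx, hxy⟩ : ∃ y ∈ W, y ≠ x ∧ ¬G.Adj x y := by simpa using hcone
  have hsub : {z ∈ W | G.Adj x z} ⊆ (W.erase x).erase y := fun z hz => by
    obtain ⟨hzW, hxz⟩ := mem_filter.1 hz
    exact mem_erase.2 ⟨fun h => hxy (h ▸ hxz), mem_erase.2 ⟨hxz.ne.symm, hzW⟩⟩
  have h₁ := card_le_card hsub
  rw [card_erase_of_mem (mem_erase.2 ⟨hyx, hy⟩), card_erase_of_mem hx] at h₁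
  have h₂ := card_le_card hWU
  have h₃ := one_lt_card.2 ⟨x, hx, y, hy, hyx.symm⟩
  omega

lemma exists_notMem_le_card_adj [DecidableEq α] {b W : Finset α} (hb : G.IsClique (b : Set α))
    (hbW : #(b \ W) = 1) : ∃ x ∉ W, #b - 1 ≤ #{y ∈ W | G.Adj x y} := by
  obtain ⟨x, hx⟩ := card_eq_one.1 hbW
  have hxbW : x ∈ b \ W := hx ▸ mem_singleton_self x
  refine ⟨x, (mem_sdiff.1 hxbW).2, ?_⟩
  rw [← card_erase_of_mem (mem_sdiff.1 hxbW).1]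
  refine card_le_card fun y hy => mem_filter.2 ⟨?_, hb (mem_sdiff.1 hxbW).1 (mem_of_mem_erase hy)
    (ne_of_mem_erase hy).symm⟩
  by_contra hyW
  have : y ∈ b \ W := mem_sdiff.2 ⟨mem_of_mem_erase hy, hyW⟩
  rw [hx, mem_singleton] at this
  exact ne_of_mem_erase hy this

end Degenerate

section EdgeCount

variable [Fintype α] [DecidableEq α] {G : SimpleGraph α} [DecidableRel G.Adj]

instance (W : Finset α) : DecidableRel (G.restrict W).Adj :=
  fun _ _ => inferInstanceAs (Decidable (_ ∧ _ ∧ _))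

variable (G) in
def HasDenseSet (w m : ℕ) : Prop :=
  ∃ W : Finset α, #W = w ∧ m ≤ #(G.restrict W).edgeFinset

lemma edgeFinset_restrict_subset_sym2 (W : Finset α) : (G.restrict W).edgeFinset ⊆ W.sym2 :=
  fun e he => by
  induction e using Sym2.ind
  rw [mem_edgeFinset] at he
  exact mk_mem_sym2_iff.2 ⟨he.1, he.2.1⟩

lemma neighborFinset_restrict (W : Finset α) (x : α) :
    (G.restrict W).neighborFinset x = if x ∈ W then {y ∈ W | G.Adj x y} else ∅ := by
  ext y
  split_ifs with hx <;> simp [hx]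

lemma sum_card_adj_eq_two_mul_card_edgeFinset_restrict (W : Finset α) :
    ∑ x ∈ W, #{y ∈ W | G.Adj x y} = 2 * #(G.restrict W).edgeFinset := by
  rw [← sum_degrees_eq_twice_card_edges, ← sum_subset (subset_univ W)]
  · refine sum_congr rfl fun x hx => ?_
    rw [← card_neighborFinset_eq_degree, neighborFinset_restrict, if_pos hx]
  · intro x _ hx
    rw [← card_neighborFinset_eq_degree, neighborFinset_restrict, if_neg hx, card_empty]

lemma card_edgeFinset_restrict_add_card_adj_le {W : Finset α} {x : α} (hx : x ∉ W) :
    #(G.restrict W).edgeFinset + #{y ∈ W | G.Adj x y} ≤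
      #(G.restrict (insert x W)).edgeFinset := by
  set B := {y ∈ W | G.Adj x y}
  have hdisj : Disjoint (G.restrict W).edgeFinset (B.map (Sym2.mkEmbedding x)) :=
    Finset.disjoint_left.2 fun e he he' => by
      obtain ⟨y, -, rfl⟩ := Finset.mem_map.1 he'
      exact hx (mem_edgeFinset.1 he).1
  rw [← card_map (Sym2.mkEmbedding x), ← card_union_of_disjoint hdisj]
  refine card_le_card (union_subset (edgeFinset_subset_edgeFinset.2 fun a b h =>
    ⟨mem_insert_of_mem h.1, mem_insert_of_mem h.2.1, h.2.2⟩) fun e he => ?_)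
  obtain ⟨y, hy, rfl⟩ := Finset.mem_map.1 he
  exact mem_edgeFinset.2 ⟨mem_insert_self x W, mem_insert_of_mem (mem_filter.1 hy).1,
    (mem_filter.1 hy).2⟩

lemma choose_two_le_card_edgeFinset_restrict {s : Finset α} (hs : G.IsClique (s : Set α)) :
    (#s).choose 2 ≤ #(G.restrict s).edgeFinset := by
  induction s using Finset.induction_on with
  | empty => simp
  | insert x s hx ih =>
    rw [coe_insert, isClique_insert] at hs
    have hadj : {y ∈ s | G.Adj x y} = s :=
      filter_true_of_mem fun y hy => hs.2 y hy fun h => hx (h ▸ hy)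
    calc (#(insert x s)).choose 2 = (#s).choose 2 + #{y ∈ s | G.Adj x y} := by
          rw [card_insert_of_notMem hx, Nat.choose_succ_succ', Nat.choose_one_right, hadj,
            add_comm]
      _ ≤ #(G.restrict s).edgeFinset + #{y ∈ s | G.Adj x y} := by grw [ih hs.1]
      _ ≤ _ := card_edgeFinset_restrict_add_card_adj_le hx

lemma isConeDegenerate_of_sparse {j : ℕ} {U : Finset α}
    (h : ∀ W ⊆ U, 2 * j + 1 ≤ #W → #(G.restrict W).edgeFinset < j * #W) :
    G.IsConeDegenerate j U := by
  intro W hWU hW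
  by_cases hsmall : #W ≤ 2 * j + 1
  · exact isConeDegenerate_of_card_le hsmall W subset_rfl hW
  by_contra hno
  have hdeg : ∀ x ∈ W, 2 * j ≤ #{y ∈ W | G.Adj x y} :=
    fun x hx => not_lt.1 fun hlt => hno ⟨x, hx, Or.inr hlt⟩
  have hsum := card_nsmul_le_sum W _ _ hdeg
  rw [sum_card_adj_eq_two_mul_card_edgeFinset_restrict, smul_eq_mul] at hsum
  have hsparse := h W hWU (by omega)
  nlinarith

lemma exists_cover_of_not_hasDenseSet {k V : ℕ} {r : Finset α → Finset α → Prop}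
    {s₀ : Finset α} (hr : ∀ a b, r a b → G.IsClique (b : Set α) ∧ #b = k + 1 ∧ #(b \ a) ≤ 1)
    (hs₀ : G.IsClique (s₀ : Set α)) (hs₀k : #s₀ = k + 1) (hkV : k + 1 ≤ V)
    (hV : ¬G.HasDenseSet V (k * V - (k + 1).choose 2)) :
    ∃ W : Finset α, #W < V ∧ ∀ s, Relation.ReflTransGen r s₀ s → s ⊆ W := by
  suffices key : ∀ u, k + 1 ≤ u → (∃ W : Finset α, #W < u ∧
      ∀ s, Relation.ReflTransGen r s₀ s → s ⊆ W) ∨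
      ∃ W, s₀ ⊆ W ∧ #W = u ∧ k * u ≤ #(G.restrict W).edgeFinset + (k + 1).choose 2 by
    refine (key V hkV).resolve_right fun ⟨W, _, hW, hdense⟩ => hV ⟨W, hW, by omega⟩
  intro u hu
  induction u, hu using Nat.le_induction with
  | base =>
    refine .inr ⟨s₀, subset_rfl, hs₀k, ?_⟩
    have hs₀e := choose_two_le_card_edgeFinset_restrict hs₀
    have hchoose : 2 * (k + 1).choose 2 = k * (k + 1) := by
      rw [Nat.choose_two_right, Nat.add_sub_cancel, mul_comm (k + 1)]
      exact Nat.two_mul_div_two_of_even (Nat.even_mul_succ_self k)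
    rw [hs₀k] at hs₀e
    omega
  | succ u hu ih =>
    rcases ih with ⟨W, hWu, hW⟩ | ⟨W, hs₀W, hWu, hdense⟩
    · exact .inl ⟨W, by omega, hW⟩
    by_cases hcover : ∀ s, Relation.ReflTransGen r s₀ s → s ⊆ W
    · exact .inl ⟨W, by omega, hcover⟩
    obtain ⟨s, hs, hsW⟩ : ∃ s, Relation.ReflTransGen r s₀ s ∧ ¬s ⊆ W := by simpa using hcover
    obtain ⟨a, b, hab, haW, hbW⟩ := hs.exists_step_of_not (P := (· ⊆ W)) hs₀W hsW
    obtain ⟨hb, hbk, hba⟩ := hr a b hab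
    have hbW1 : #(b \ W) = 1 :=
      le_antisymm ((card_le_card (sdiff_subset_sdiff subset_rfl haW)).trans hba)
        (card_pos.2 (sdiff_nonempty.2 hbW))
    obtain ⟨x, hxW, hxadj⟩ := exists_notMem_le_card_adj hb hbW1
    refine .inr ⟨insert x W, hs₀W.trans (subset_insert x W),
      by rw [card_insert_of_notMem hxW, hWu], ?_⟩
    have hgrow := card_edgeFinset_restrict_add_card_adj_le (G := G) hxW
    rw [hbk, Nat.add_sub_cancel] at hxadj
    rw [mul_add, mul_one]
    omega

end EdgeCount

end SimpleGraph

section Filling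

variable {α : Type*} [Fintype α] [LinearOrder α] {F : Type*} [Field F] {G : SimpleGraph α}
  [DecidableRel G.Adj]

theorem homologyVanishes_cliqueComplexOn_of_isConeDegenerate {j : ℕ} {U : Finset α}
    (hU : G.IsConeDegenerate j U) : HomologyVanishes (cliqueComplexOn G U) j F := by
  rcases U.eq_empty_or_nonempty with rfl | hne
  · exact homologyVanishes_cliqueComplexOn_empty
  obtain ⟨x, hx, hcone | hdeg⟩ := hU U subset_rfl hne
  · exact homologyVanishes_cliqueComplexOn_of_cone hx hcone
  obtain ⟨i, rfl⟩ : ∃ i, j = i + 1 := ⟨j - 1, by omega⟩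
  exact homologyVanishes_cliqueComplexOn_of_link hx
    (homologyVanishes_cliqueComplexOn_of_isConeDegenerate
      (SimpleGraph.isConeDegenerate_of_card_le (by omega)))
    (homologyVanishes_cliqueComplexOn_of_isConeDegenerate (hU.mono (erase_subset x U)))
termination_by (j, #U)
decreasing_by
  · exact Prod.Lex.left _ _ (by omega)
  · subst_vars
    exact Prod.Lex.right _ (card_lt_card (erase_ssubset hx))

end Filling

section Components

variable {α : Type*} [Fintype α] [LinearOrder α] {F : Type*} [Field F]

/-- For simplices of equal dimension, `#(b \ a) ≤ 1` says that `a` and `b` share a facet. -/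
def FacetStep (c : Finset α → F) (a b : Finset α) : Prop :=
  c b ≠ 0 ∧ #(b \ a) ≤ 1

lemma simplicialBoundary_indicator_eq_zero {c : Finset α → F} (hc : simplicialBoundary c = 0)
    {C : Set (Finset α)}
    (hC : ∀ t y y', insert y t ∈ C → c (insert y' t) ≠ 0 → insert y' t ∈ C) :
    simplicialBoundary (C.indicator c) = 0 := by
  funext t
  by_cases hex : ∃ y, insert y t ∈ C
  · obtain ⟨y, hy⟩ := hex
    rw [← congrFun hc t]
    refine sum_congr rfl fun y' _ => congrArg _ (Set.indicator_apply_eq_self.2 fun hy' => ?_)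
    exact not_not.1 fun h => hy' (hC t y y' hy h)
  · exact sum_eq_zero fun y _ => by
      rw [Set.indicator_of_notMem fun h => hex ⟨y, h⟩, mul_zero]

theorem homologyVanishes_of_reachable {K : Set (Finset α)} {k : ℕ}
    (h : ∀ (c : Finset α → F) (s₀ : Finset α), IsSimplicialChain K k c →
      simplicialBoundary c = 0 → c s₀ ≠ 0 →
      (∀ s, c s ≠ 0 → Relation.ReflTransGen (FacetStep c) s₀ s) →
      ∃ d, IsSimplicialChain K (k + 1) d ∧ simplicialBoundary d = c) :
    HomologyVanishes K k F := by
  intro c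
  induction hn : (Function.support c).ncard using Nat.strong_induction_on generalizing c with
  | _ n ih =>
  intro hc hcyc
  by_cases hc0 : c = 0
  · subst hc0
    exact ⟨0, fun s hs => absurd rfl hs, funext fun t => by simp [simplicialBoundary]⟩
  obtain ⟨s₀, hs₀⟩ : ∃ s₀, c s₀ ≠ 0 := Function.ne_iff.1 hc0
  set C := {s | Relation.ReflTransGen (FacetStep c) s₀ s}
  have hs₀C : s₀ ∈ C := Relation.ReflTransGen.refl
  have hC : simplicialBoundary (C.indicator c) = 0 := by
    refine simplicialBoundary_indicator_eq_zero hcyc fun t y y' hy hy' => hy.tail ⟨hy', ?_⟩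
    calc #(insert y' t \ insert y t) ≤ #{y'} :=
          card_le_card fun v hv => by simp at hv ⊢; tauto
      _ = 1 := card_singleton y'
  have hreach : ∀ s ∈ C, Relation.ReflTransGen (FacetStep (C.indicator c)) s₀ s := by
    intro s hs
    induction hs with
    | refl => exact .refl
    | @tail b b' hab hbc ih =>
      have hb'C : b' ∈ C := hab.tail hbc
      exact ih.tail ⟨by rw [Set.indicator_of_mem hb'C]; exact hbc.1, hbc.2⟩
  obtain ⟨d₁, hd₁, hd₁c⟩ := h (C.indicator c) s₀ (hc.indicator C) hC
    (by rwa [Set.indicator_of_mem hs₀C]) fun s hs =>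
      hreach s (Set.indicator_apply_ne_zero.1 hs).1
  have hlt : (Function.support (Cᶜ.indicator c)).ncard < n := by
    rw [← hn, Set.support_indicator]
    refine Set.ncard_lt_ncard ⟨Set.inter_subset_right, fun h => ?_⟩
    exact (h hs₀).1 hs₀C
  obtain ⟨d₂, hd₂, hd₂c⟩ := ih _ hlt _ rfl (hc.indicator Cᶜ) (by
    rw [Set.indicator_compl, simplicialBoundary_sub, hcyc, hC, sub_zero])
  refine ⟨d₁ + d₂, hd₁.add hd₂, ?_⟩
  rw [simplicialBoundary_add, hd₁c, hd₂c, Set.indicator_self_add_compl]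

end Components

section Deterministic

variable {α : Type*} [Fintype α] [LinearOrder α] {F : Type*} [Field F] {G : SimpleGraph α}
  [DecidableRel G.Adj]

theorem homologyVanishes_cliqueComplex_of_not_hasDenseSet {k V : ℕ} (hkV : k + 1 ≤ V)
    (hV : ¬G.HasDenseSet V (k * V - (k + 1).choose 2))
    (hsparse : ∀ w, 2 * k + 1 ≤ w → w ≤ V → ¬G.HasDenseSet w (k * w)) :
    HomologyVanishes {s : Finset α | G.IsClique (s : Set α)} k F := by
  refine homologyVanishes_of_reachable fun c s₀ hc hcyc hs₀ hreach => ?_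
  obtain ⟨W, hWV, hW⟩ := SimpleGraph.exists_cover_of_not_hasDenseSet (r := FacetStep c)
    (fun a b hab => ⟨(hc b hab.1).1, (hc b hab.1).2, hab.2⟩) (hc s₀ hs₀).1 (hc s₀ hs₀).2 hkV hV
  have hdeg : G.IsConeDegenerate k W := SimpleGraph.isConeDegenerate_of_sparse fun U hUW hU =>
    not_le.1 fun hdense =>
      hsparse #U hU ((card_le_card hUW).trans hWV.le) ⟨U, rfl, hdense⟩
  obtain ⟨d, hd, hdc⟩ := homologyVanishes_cliqueComplexOn_of_isConeDegenerate hdeg c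
    (fun s hs => ⟨⟨(hc s hs).1, hW s (hreach s hs)⟩, (hc s hs).2⟩) hcyc
  exact ⟨d, hd.mono fun s hs => hs.1, hdc⟩

end Deterministic

lemma tendsto_measure_one_of_compl_subset {Ω : ℕ → Type*} [∀ n, MeasurableSpace (Ω n)]
    {μ : ∀ n, Measure (Ω n)} [∀ n, IsProbabilityMeasure (μ n)] {s t : ∀ n, Set (Ω n)}
    (hs : Tendsto (fun n => μ n (s n)) atTop (nhds 0)) (hst : ∀ n, (s n)ᶜ ⊆ t n) :
    Tendsto (fun n => μ n (t n)) atTop (nhds 1) := by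
  have hlow : Tendsto (fun n => 1 - μ n (s n)) atTop (nhds 1) := by
    simpa using ENNReal.Tendsto.sub tendsto_const_nhds hs (Or.inl ENNReal.one_ne_top)
  refine tendsto_of_tendsto_of_tendsto_of_le_of_le hlow tendsto_const_nhds (fun n => ?_)
    fun n => prob_le_one
  rw [tsub_le_iff_right, ← measure_univ (μ := μ n)]
  exact (measure_mono fun ω _ => (em (ω ∈ s n)).elim Or.inr fun h => Or.inl (hst n h)).trans
    (measure_union_le _ _)

lemma ENNReal.tendsto_natCast_rpow_neg {c : ℝ} (hc : 0 < c) :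
    Tendsto (fun n : ℕ => (n : ENNReal) ^ (-c)) atTop (nhds 0) := by
  have := ((ENNReal.continuous_rpow_const (y := c)).tendsto 0).comp
    ENNReal.tendsto_inv_nat_nhds_zero
  simpa [Function.comp_def, ENNReal.zero_rpow_of_pos hc, ENNReal.inv_rpow, ENNReal.rpow_neg]
    using this

section ErdosRenyi

def edgeGraph {n : ℕ} (ω : Sym2 (Fin n) → Bool) : SimpleGraph (Fin n) where
  Adj := hasEdge ω
  symm := ⟨fun a b h => ⟨h.1.symm, by rw [Sym2.eq_swap]; exact h.2⟩⟩
  loopless := ⟨fun _ h => h.1 rfl⟩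

instance {n : ℕ} (ω : Sym2 (Fin n) → Bool) : DecidableRel (edgeGraph ω).Adj :=
  fun a b => inferInstanceAs (Decidable (a ≠ b ∧ ω s(a, b) = true))

lemma eq_true_of_mem_edgeSet_edgeGraph {n : ℕ} {ω : Sym2 (Fin n) → Bool} {e : Sym2 (Fin n)}
    (he : e ∈ (edgeGraph ω).edgeSet) : ω e = true := by
  induction e using Sym2.ind
  exact he.2

instance (n : ℕ) (p : ENNReal) (hp : p ≤ 1) : IsProbabilityMeasure (erdosRenyi n p hp) := by
  unfold erdosRenyi
  infer_instance

lemma erdosRenyi_forall_eq_true (n : ℕ) (p : ENNReal) (hp : p ≤ 1) (E : Finset (Sym2 (Fin n))) :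
    erdosRenyi n p hp {ω | ∀ e ∈ E, ω e = true} = p ^ #E := by
  have hset : {ω : Sym2 (Fin n) → Bool | ∀ e ∈ E, ω e = true} =
      Set.univ.pi fun e => if e ∈ E then {true} else Set.univ := by
    ext ω
    refine forall_congr' fun e => ?_
    by_cases he : e ∈ E <;> simp [he]
  rw [erdosRenyi, hset, Measure.pi_pi]
  calc ∏ e, _ = ∏ e, if e ∈ E then p else 1 := prod_congr rfl fun e _ => by
        split_ifs
        · rw [PMF.toMeasure_apply_singleton _ _ (measurableSet_singleton true)]
          exact (PMF.bernoulli_apply _ true).trans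
            (ENNReal.coe_toNNReal (ne_top_of_le_ne_top ENNReal.one_ne_top hp))
        · exact measure_univ
    _ = p ^ #E := by rw [prod_ite_mem univ E, univ_inter, prod_const]

lemma erdosRenyi_hasDenseSet_le (n : ℕ) (p : ENNReal) (hp : p ≤ 1) (w m : ℕ) :
    erdosRenyi n p hp {ω | (edgeGraph ω).HasDenseSet w m} ≤
      n.choose w * (((w + 1).choose 2).choose m * p ^ m) := by
  have hsub : {ω | (edgeGraph ω).HasDenseSet w m} ⊆ ⋃ W ∈ powersetCard w (univ : Finset (Fin n)),
      ⋃ E ∈ powersetCard m W.sym2, {ω | ∀ e ∈ E, ω e = true} := by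
    rintro ω ⟨W, hW, hm⟩
    obtain ⟨E, hEW, hE⟩ := exists_subset_card_eq hm
    simp only [Set.mem_iUnion, mem_powersetCard]
    refine ⟨W, ⟨subset_univ W, hW⟩, E,
      ⟨hEW.trans (SimpleGraph.edgeFinset_restrict_subset_sym2 W), hE⟩,
      fun e he => eq_true_of_mem_edgeSet_edgeGraph ?_⟩
    exact SimpleGraph.edgeSet_mono (SimpleGraph.restrict_le _ W)
      (SimpleGraph.mem_edgeFinset.1 (hEW he))
  calc _ ≤ ∑ W ∈ powersetCard w (univ : Finset (Fin n)), ∑ E ∈ powersetCard m W.sym2,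
        erdosRenyi n p hp {ω | ∀ e ∈ E, ω e = true} :=
        (measure_mono hsub).trans ((measure_biUnion_finset_le _ _).trans
          (sum_le_sum fun W _ => measure_biUnion_finset_le _ _))
    _ = ∑ W ∈ powersetCard w (univ : Finset (Fin n)), ((w + 1).choose 2).choose m * p ^ m := by
        refine sum_congr rfl fun W hW => ?_
        rw [sum_congr rfl fun E hE => by rw [erdosRenyi_forall_eq_true, (mem_powersetCard.1 hE).2],
          sum_const, card_powersetCard, card_sym2, (mem_powersetCard.1 hW).2, nsmul_eq_mul]
    _ = _ := by rw [sum_const, card_powersetCard, card_univ, Fintype.card_fin, nsmul_eq_mul]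

lemma tendsto_erdosRenyi_hasDenseSet {α : ℝ} {p : ℕ → ENNReal} (hp : ∀ n, p n ≤ 1)
    (hbound : ∀ n : ℕ, p n ≤ (n : ENNReal) ^ (-α)) {w m : ℕ} (hwm : (w : ℝ) < α * m) :
    Tendsto (fun n => erdosRenyi n (p n) (hp n) {ω | (edgeGraph ω).HasDenseSet w m}) atTop
      (nhds 0) := by
  set C : ENNReal := ((((w + 1).choose 2).choose m : ℕ) : ENNReal)
  have hlim : Tendsto (fun n : ℕ => C * (n : ENNReal) ^ (-(α * m - w))) atTop (nhds 0) := by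
    simpa using ENNReal.Tendsto.const_mul
      (ENNReal.tendsto_natCast_rpow_neg (c := α * m - w) (by linarith))
      (Or.inr (ENNReal.natCast_ne_top _))
  refine tendsto_of_tendsto_of_tendsto_of_le_of_le' tendsto_const_nhds hlim
    (Eventually.of_forall fun _ => zero_le) ?_
  filter_upwards [eventually_ge_atTop 1] with n hn
  have hn0 : (n : ENNReal) ≠ 0 := by exact_mod_cast (Nat.one_le_iff_ne_zero.1 hn)
  calc _ ≤ n.choose w * (C * p n ^ m) := erdosRenyi_hasDenseSet_le n (p n) (hp n) w m
    _ ≤ (n : ENNReal) ^ w * (C * ((n : ENNReal) ^ (-α)) ^ m) := by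
        gcongr
        · exact_mod_cast Nat.choose_le_pow n w
        · exact hbound n
    _ = C * (n : ENNReal) ^ (-(α * m - w)) := by
        rw [← ENNReal.rpow_natCast (n : ENNReal) w, ← ENNReal.rpow_natCast _ m, ← ENNReal.rpow_mul,
          mul_left_comm, ← ENNReal.rpow_add _ _ hn0 (ENNReal.natCast_ne_top n)]
        congr 2
        ring

lemma tendsto_erdosRenyi_exists_hasDenseSet {α : ℝ} {p : ℕ → ENNReal} (hp : ∀ n, p n ≤ 1)
    (hbound : ∀ n : ℕ, p n ≤ (n : ENNReal) ^ (-α)) (D : Finset (ℕ × ℕ))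
    (hD : ∀ d ∈ D, (d.1 : ℝ) < α * d.2) :
    Tendsto (fun n => erdosRenyi n (p n) (hp n)
      {ω | ∃ d ∈ D, (edgeGraph ω).HasDenseSet d.1 d.2}) atTop (nhds 0) := by
  have hsum := tendsto_finsetSum D fun d hd => tendsto_erdosRenyi_hasDenseSet hp hbound (hD d hd)
  rw [sum_const_zero] at hsum
  refine tendsto_of_tendsto_of_tendsto_of_le_of_le tendsto_const_nhds hsum (fun _ => zero_le)
    fun n => (measure_mono fun ω hω => ?_).trans (measure_biUnion_finset_le D _)
  obtain ⟨d, hd, h⟩ := hω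
  exact Set.mem_biUnion hd h

end ErdosRenyi

lemma exists_vertex_bound {k : ℕ} {α : ℝ} (hαk : 1 < α * k) :
    ∃ V : ℕ, k + 1 ≤ V ∧ (V : ℝ) < α * (k * V - (k + 1).choose 2 : ℕ) := by
  obtain ⟨V₀, hV₀⟩ := exists_nat_gt (α * (k + 1).choose 2 / (α * k - 1))
  set V := max (k + 1) V₀
  have hV : α * (k + 1).choose 2 < (α * k - 1) * V :=
    (div_lt_iff₀' (by linarith)).1 (hV₀.trans_le (by exact_mod_cast le_max_right _ _))
  have hchoose : (k + 1).choose 2 ≤ k * V := by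
    rw [Nat.choose_two_right, Nat.add_sub_cancel, mul_comm]
    exact (Nat.div_le_self _ _).trans (Nat.mul_le_mul_left k (le_max_left _ _))
  refine ⟨V, le_max_left _ _, ?_⟩
  rw [Nat.cast_sub hchoose]
  push_cast
  linarith

/-- If `p_n ≤ n^{−α}` with `α > 1/k`, then w.h.p. the clique complex of `G(n,p_n)` has
vanishing `k`-th homology (over every field of coefficients). -/
theorem homology_vanishes_below_birth_threshold
    (k : ℕ) (hk : 1 ≤ k) (α : ℝ) (hα : 1 / (k : ℝ) < α)
    (p : ℕ → ENNReal) (hp : ∀ n, p n ≤ 1)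
    (hbound : ∀ n : ℕ, p n ≤ (n : ENNReal) ^ (-α)) :
    Tendsto
      (fun n => erdosRenyi n (p n) (hp n)
        {ω | ∀ (F : Type) [Field F], HomologyVanishes (cliqueComplexOf ω) k F})
      atTop (nhds 1) := by
  have hαk : 1 < α * k := (div_lt_iff₀ (by exact_mod_cast hk)).1 hα
  obtain ⟨V, hkV, hV⟩ := exists_vertex_bound hαk
  -- `(w, m) ∈ D` forbids `w` vertices spanning `m` edges
  set D : Finset (ℕ × ℕ) :=
    insert (V, k * V - (k + 1).choose 2) ((Icc (2 * k + 1) V).image fun w => (w, k * w))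
  have hD : ∀ d ∈ D, (d.1 : ℝ) < α * d.2 := by
    simp only [D, mem_insert, mem_image, mem_Icc]
    rintro _ (rfl | ⟨w, ⟨hw, -⟩, rfl⟩)
    · exact hV
    · have : (1 : ℝ) ≤ w := by exact_mod_cast (by omega : 1 ≤ w)
      push_cast
      nlinarith
  refine tendsto_measure_one_of_compl_subset
    (tendsto_erdosRenyi_exists_hasDenseSet hp hbound D hD) fun n ω hω F _ => ?_
  simp only [Set.mem_compl_iff, Set.mem_ofPred_eq, not_exists, not_and] at hω
  exact homologyVanishes_cliqueComplex_of_not_hasDenseSet hkV (hω _ (mem_insert_self _ _))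
    fun w hw hwV => hω _ (mem_insert_of_mem (mem_image_of_mem _ (mem_Icc.2 ⟨hw, hwV⟩)))
end
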